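/- Let a ≤ b ≤ c be reals, let λ₁, λ₂, λ₃ ≥ 0 with λ₁ + λ₂ + λ₃ = 1, z₁, z₂ ∈ {0,1} with z₁ + z₂ = 1, z₁ ≥ λ₁, z₂ ≥ λ₃, and set x = λ₁a + λ₂b + λ₃c. Then for any real w with x² ≤ w ≤ λ₁a² + λ₂b² + λ₃c², either a ≤ x ≤ b and x² ≤ w ≤ (a + b)x − ab, or b ≤ x ≤ c and x² ≤ w ≤ (b + c)x − bc; i.e., every feasible point of the piecewise quadratic λ-formulation lies in the union of the two secant-bounded convex quadratic regions. -/

import Mathlib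

/-! The adjacency constraints force `λ₁ = 0` or `λ₃ = 0`, so `x` is a convex combination of two
consecutive breakpoints `p ≤ q`. Between them it lies in `[p, q]`, and because the weights sum to
one the λ-over-estimator `s p² + t q²` coincides with the secant `(p + q) x - p q`. -/

theorem secant_eq_weighted_sq {s t : ℝ} (hst : s + t = 1) (p q : ℝ) :
    (p + q) * (s * p + t * q) - p * q = s * p ^ 2 + t * q ^ 2 := by
  linear_combination (p * q) * hst

theorem mem_secant_region_of_two_point {p q s t x w : ℝ} (hpq : p ≤ q)
    (hs : 0 ≤ s) (ht : 0 ≤ t) (hst : s + t = 1) (hx : x = s * p + t * q)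
    (hw1 : x ^ 2 ≤ w) (hw2 : w ≤ s * p ^ 2 + t * q ^ 2) :
    p ≤ x ∧ x ≤ q ∧ x ^ 2 ≤ w ∧ w ≤ (p + q) * x - p * q := by
  have hxp : x - p = t * (q - p) := by rw [hx]; linear_combination p * hst
  have hqx : q - x = s * (q - p) := by rw [hx]; linear_combination (-q) * hst
  refine ⟨?_, ?_, hw1, ?_⟩
  · linarith [mul_nonneg ht (sub_nonneg.2 hpq)]
  · linarith [mul_nonneg hs (sub_nonneg.2 hpq)]
  · rwa [hx, secant_eq_weighted_sq hst]

theorem eq_zero_or_eq_zero_of_adjacency {l1 l3 z1 z2 : ℝ} (hl1 : 0 ≤ l1) (hl3 : 0 ≤ l3)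
    (hz1 : z1 = 0 ∨ z1 = 1) (hzsum : z1 + z2 = 1) (hadj1 : l1 ≤ z1) (hadj3 : l3 ≤ z2) :
    l1 = 0 ∨ l3 = 0 := by
  rcases hz1 with rfl | rfl
  · exact Or.inl (le_antisymm hadj1 hl1)
  · exact Or.inr (le_antisymm (by linarith) hl3)

theorem piecewise_quadratic_in_union_general
    (a b c l1 l2 l3 z1 z2 x w : ℝ)
    (hab : a ≤ b) (hbc : b ≤ c)
    (hl1 : 0 ≤ l1) (hl2 : 0 ≤ l2) (hl3 : 0 ≤ l3)
    (hsum : l1 + l2 + l3 = 1)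
    (hz1 : z1 = 0 ∨ z1 = 1)
    (hzsum : z1 + z2 = 1)
    (hadj1 : l1 ≤ z1) (hadj3 : l3 ≤ z2)
    (hx : x = l1 * a + l2 * b + l3 * c)
    (hw1 : x ^ 2 ≤ w) (hw2 : w ≤ l1 * a ^ 2 + l2 * b ^ 2 + l3 * c ^ 2) :
    (a ≤ x ∧ x ≤ b ∧ x ^ 2 ≤ w ∧ w ≤ (a + b) * x - a * b) ∨
    (b ≤ x ∧ x ≤ c ∧ x ^ 2 ≤ w ∧ w ≤ (b + c) * x - b * c) := by
  rcases eq_zero_or_eq_zero_of_adjacency hl1 hl3 hz1 hzsum hadj1 hadj3 with rfl | rfl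
  · right
    simp only [zero_mul, zero_add] at hsum hx hw2
    exact mem_secant_region_of_two_point hbc hl2 hl3 hsum hx hw1 hw2
  · left
    simp only [zero_mul, add_zero] at hsum hx hw2
    exact mem_secant_region_of_two_point hab hl1 hl2 hsum hx hw1 hw2

/-- Every feasible point of the piecewise quadratic λ-formulation lies in the
union of the two secant-bounded convex quadratic regions. -/
theorem piecewise_quadratic_in_union
    (a b c l1 l2 l3 z1 z2 x w : ℝ)
    (hab : a ≤ b) (hbc : b ≤ c)
    (hl1 : 0 ≤ l1) (hl2 : 0 ≤ l2) (hl3 : 0 ≤ l3)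
    (hsum : l1 + l2 + l3 = 1)
    (hz1 : z1 = 0 ∨ z1 = 1) (hz2 : z2 = 0 ∨ z2 = 1)
    (hzsum : z1 + z2 = 1)
    (hadj1 : l1 ≤ z1) (hadj3 : l3 ≤ z2)
    (hx : x = l1 * a + l2 * b + l3 * c)
    (hw1 : x ^ 2 ≤ w) (hw2 : w ≤ l1 * a ^ 2 + l2 * b ^ 2 + l3 * c ^ 2) :
    (a ≤ x ∧ x ≤ b ∧ x ^ 2 ≤ w ∧ w ≤ (a + b) * x - a * b) ∨
    (b ≤ x ∧ x ≤ c ∧ x ^ 2 ≤ w ∧ w ≤ (b + c) * x - b * c) :=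
  piecewise_quadratic_in_union_general a b c l1 l2 l3 z1 z2 x w hab hbc hl1 hl2 hl3 hsum hz1 hzsum
    hadj1 hadj3 hx hw1 hw2
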